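/- For any ℕ-valued random variable τ with distribution determined by a polynomial in p (each P(τ = k) a polynomial in p with rational coefficients), the function p ↦ (1 + Σ_k P(τ = k)²)/2 is a polynomial in p; in the game with α, β, n as above with ⌈n/(α+β)⌉ < ⌈n/α⌉, the first player's winning probability I(p | n, α, β) is a polynomial in p of degree 2⌈n/α⌉ − 2. -/

import Mathlib

/-!
Write `M + 1 = ⌈n / α⌉`. A player scores at least `α (M + 1) ≥ n` points within `M + 1` tosses,
so the hitting time `τ` is determined by the set `S ⊆ {0, …, M - 1}` of heads among the first
`M` tosses, and `P(τ = k)` is a sum of terms `p ^ #S (1 - p) ^ (M - #S)`, of degree at most `M`.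
For independent players, `P(τ₁ ≤ τ₂) = (1 + ∑ₖ P(τ = k) ²) / 2` by symmetry, which has degree
at most `2 M`. The top coefficient of `P(τ = M + 1) = P(Bin(M, p) < c)`, with
`c = ⌈(n - α M) / β⌉₊`, is `± (M - 1).choose (c - 1)`, and `1 ≤ c ≤ M` is exactly the hypothesis
`⌈n / (α + β)⌉ < ⌈n / α⌉`; so the coefficient of `p ^ (2 M)` is positive.
-/

open MeasureTheory ProbabilityTheory

/-- Number of tosses for a player to first accumulate at least `n` points, where toss `i`
gives `α + β` points for heads (`X i ω = true`) and `α` points for tails. -/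
noncomputable def hitTime {Ω : Type*} (α β n : ℝ) (X : ℕ → Ω → Bool) (ω : Ω) : ℕ :=
  sInf {k : ℕ | n ≤ α * k + β * ((Finset.range k).filter (fun i => X i ω = true)).card}

open Finset Polynomial

theorem prod_ite_mem_of_subset {ι M : Type*} [DecidableEq ι] [CommMonoid M] {s S : Finset ι}
    (hS : S ⊆ s) (a b : M) : ∏ i ∈ s, (if i ∈ S then a else b) = a ^ #S * b ^ (#s - #S) := by
  rw [prod_ite, prod_const, prod_const, filter_mem_eq_inter, inter_eq_right.2 hS, filter_not,
    filter_mem_eq_inter, inter_eq_right.2 hS, card_sdiff_of_subset hS]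

theorem card_le_of_mem_powerset_range {M : ℕ} {S : Finset ℕ} (hS : S ∈ (range M).powerset) :
    #S ≤ M :=
  card_range M ▸ card_le_card (mem_powerset.1 hS)

theorem neg_one_pow_sub_eq_mul {R : Type*} [CommRing R] {N j : ℕ} (hj : j ≤ N) :
    (-1 : R) ^ (N - j) = (-1) ^ N * (-1) ^ j := by
  obtain ⟨d, rfl⟩ := Nat.exists_eq_add_of_le hj
  rw [Nat.add_sub_cancel_left, pow_add, mul_right_comm, ← mul_pow, neg_one_mul, neg_neg, one_pow,
    one_mul]

theorem sum_range_choose_mul_neg_one_pow_sub {R : Type*} [CommRing R] (m c : ℕ) :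
    ∑ j ∈ range (c + 1), ((m + 1).choose j : R) * (-1) ^ (m + 1 - j)
      = (-1) ^ (m + 1 + c) * m.choose c := by
  have hterm : ∀ j, ((m + 1).choose j : R) * (-1) ^ (m + 1 - j)
      = (-1) ^ (m + 1) * ((-1) ^ j * (m + 1).choose j) := by
    intro j
    rcases le_or_gt j (m + 1) with hj | hj
    · rw [neg_one_pow_sub_eq_mul hj]; ring
    · simp [Nat.choose_eq_zero_of_lt hj]
  have h := congrArg (Int.cast : ℤ → R)
    (Int.alternating_sum_range_choose_eq_choose (n := m) (m := c))
  push_cast at h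
  rw [sum_congr rfl fun j _ => hterm j, ← mul_sum, h]
  ring

/-- Symmetrizing `1[g i ≤ g j]` gives `1 + 1[g i = g j]`. -/
theorem two_mul_sum_filter_le {ι κ R : Type*} [LinearOrder κ] [CommRing R] (s : Finset ι)
    (t : Finset κ) (g : ι → κ) (hg : ∀ i ∈ s, g i ∈ t) (f : ι → R) :
    2 * ∑ x ∈ s ×ˢ s with g x.1 ≤ g x.2, f x.1 * f x.2
      = (∑ i ∈ s, f i) ^ 2 + ∑ k ∈ t, (∑ i ∈ s with g i = k, f i) ^ 2 := by
  have hsymm : ∀ i j, ((if g i ≤ g j then f i * f j else 0) + if g j ≤ g i then f j * f i else 0)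
      = f i * f j + if g i = g j then f i * f j else 0 := by
    intro i j
    rcases lt_trichotomy (g i) (g j) with h | h | h
    · simp [h.le, h.not_ge, h.ne]
    · simp [h, mul_comm]
    · simp [h.le, h.not_ge, h.ne', mul_comm]
  have hdiag : ∑ i ∈ s, ∑ j ∈ s, (if g i = g j then f i * f j else 0)
      = ∑ k ∈ t, (∑ i ∈ s with g i = k, f i) ^ 2 := by
    rw [← sum_fiberwise_of_maps_to hg]
    refine sum_congr rfl fun k _ => ?_
    rw [sq, sum_mul]
    refine sum_congr rfl fun i hi => ?_
    rw [(mem_filter.1 hi).2, mul_sum, sum_filter]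
    exact sum_congr rfl fun j _ => if_congr eq_comm rfl rfl
  rw [sum_filter, sum_product, two_mul]
  nth_rewrite 2 [sum_comm]
  rw [← sum_add_distrib, sq, sum_mul_sum, ← hdiag, ← sum_add_distrib]
  refine sum_congr rfl fun i _ => ?_
  rw [← sum_add_distrib, ← sum_add_distrib]
  exact sum_congr rfl fun j _ => hsymm i j

section Weights

/-- `p ^ #S * (1 - p) ^ (M - #S)` is the probability that the heads among the first `M` tosses
are exactly at the positions in `S ⊆ range M`. -/
noncomputable def prefixWeight (R : Type*) [CommRing R] (M : ℕ) (S : Finset ℕ) : R[X] :=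
  X ^ #S * (1 - X) ^ (M - #S)

variable {R : Type*} [CommRing R]

theorem eval_prefixWeight (M : ℕ) (S : Finset ℕ) (p : R) :
    (prefixWeight R M S).eval p = p ^ #S * (1 - p) ^ (M - #S) := by
  simp [prefixWeight]

theorem natDegree_prefixWeight_le {M : ℕ} {S : Finset ℕ} (hS : #S ≤ M) :
    (prefixWeight R M S).natDegree ≤ M := by
  unfold prefixWeight
  refine natDegree_mul_le.trans ?_
  have h₁ : (X ^ #S : R[X]).natDegree ≤ #S := natDegree_X_pow_le _
  have h₂ : ((1 - X) ^ (M - #S) : R[X]).natDegree ≤ M - #S := by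
    simpa using natDegree_pow_le_of_le (M - #S)
      (natDegree_sub_le_of_le natDegree_one.le natDegree_X_le)
  omega

theorem coeff_prefixWeight {M : ℕ} {S : Finset ℕ} (hS : #S ≤ M) :
    (prefixWeight R M S).coeff M = (-1) ^ (M - #S) := by
  have h₁ : (1 - X : R[X]) = C (-1) * (X + C (-1)) := by simp only [map_neg, map_one]; ring
  obtain ⟨d, rfl⟩ := Nat.exists_eq_add_of_le hS
  rw [prefixWeight, Nat.add_sub_cancel_left, add_comm, coeff_X_pow_mul, h₁, mul_pow, ← C_pow,
    coeff_C_mul, coeff_X_add_C_pow]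
  simp

theorem sum_prefixWeight (M : ℕ) : ∑ S ∈ (range M).powerset, prefixWeight R M S = 1 := by
  have h := sum_pow_mul_eq_add_pow (X : R[X]) (1 - X) (range M)
  rwa [card_range, add_sub_cancel, one_pow] at h

theorem coeff_sum_prefixWeight_card_lt {m c : ℕ} (hc : c ≤ m) :
    (∑ S ∈ (range (m + 1)).powerset with #S < c + 1, prefixWeight R (m + 1) S).coeff (m + 1)
      = (-1) ^ (m + 1 + c) * m.choose c := by
  have hfilter : {j ∈ range (m + 2) | j < c + 1} = range (c + 1) := by
    ext j; simp only [mem_filter, mem_range]; omega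
  rw [finsetSum_coeff, sum_filter,
    sum_congr rfl fun _ hS => by rw [coeff_prefixWeight (card_le_of_mem_powerset_range hS)],
    sum_powerset_apply_card (fun j => if j < c + 1 then (-1 : R) ^ (m + 1 - j) else 0),
    card_range]
  simp only [nsmul_eq_mul, mul_ite, mul_zero]
  rw [← sum_filter, hfilter, sum_range_choose_mul_neg_one_pow_sub]

end Weights

section HalfOneAddSumSq

variable {K : Type*} [Field K]

/-- With `P k = P(τ₁ = k)` this is the paper's `I(p | n, α, β)`. -/
noncomputable def halfOneAddSumSq (s : Finset ℕ) (P : ℕ → K[X]) : K[X] :=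
  C 2⁻¹ * (1 + ∑ k ∈ s, P k ^ 2)

theorem eval_halfOneAddSumSq (s : Finset ℕ) (P : ℕ → K[X]) (p : K) :
    (halfOneAddSumSq s P).eval p = (1 + ∑ k ∈ s, (P k).eval p ^ 2) / 2 := by
  simp [halfOneAddSumSq, eval_finsetSum, div_eq_inv_mul]

/-- The coefficients of `X ^ (2 * M)` in the `P k ^ 2` are squares, so they cannot cancel. -/
theorem natDegree_halfOneAddSumSq [LinearOrder K] [IsStrictOrderedRing K] {s : Finset ℕ}
    {P : ℕ → K[X]} {M k : ℕ} (hdeg : ∀ k ∈ s, (P k).natDegree ≤ M) (hk : k ∈ s)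
    (hcoeff : (P k).coeff M ≠ 0) :
    (halfOneAddSumSq s P).natDegree = 2 * M := by
  have hsq : ∀ k ∈ s, (P k ^ 2).natDegree ≤ 2 * M := fun k hk =>
    natDegree_pow_le_of_le 2 (hdeg k hk)
  refine natDegree_eq_of_le_of_coeff_ne_zero ?_ ?_
  · refine natDegree_C_mul_le _ _ |>.trans <| natDegree_add_le_of_degree_le ?_ ?_
    · exact natDegree_one.le.trans (Nat.zero_le _)
    · exact natDegree_sum_le_of_forall_le _ _ hsq
  · have hone : 0 ≤ (1 : K[X]).coeff (2 * M) := by rw [coeff_one]; split_ifs <;> norm_num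
    have hsum : 0 < ∑ k ∈ s, (P k).coeff M ^ 2 :=
      sum_pos' (fun _ _ => sq_nonneg _) ⟨k, hk, by positivity⟩
    rw [halfOneAddSumSq, coeff_C_mul, coeff_add, finsetSum_coeff,
      sum_congr rfl fun k hk => coeff_pow_of_natDegree_le (hdeg k hk)]
    exact (mul_pos (by norm_num) (by linarith)).ne'

theorem exists_eval_eq_halfOneAddSumSq (s : Finset ℕ) {P : ℕ → K → K}
    (hP : ∀ k, ∃ q : K[X], ∀ p, P k p = q.eval p) :
    ∃ Q : K[X], ∀ p, (1 + ∑ k ∈ s, P k p ^ 2) / 2 = Q.eval p := by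
  choose q hq using hP
  exact ⟨halfOneAddSumSq s q, fun p => by simp [eval_halfOneAddSumSq, hq]⟩

end HalfOneAddSumSq

section Independence

variable {Ω ι : Type*} [MeasurableSpace Ω] {μ : Measure Ω} [IsProbabilityMeasure μ] {p : ℝ}

theorem measure_preimage_bool {Z : Ω → Bool} (hZm : Measurable Z)
    (hZp : μ {ω | Z ω = true} = ENNReal.ofReal p) (hp : 0 ≤ p) (b : Bool) :
    μ (Z ⁻¹' {b}) = ENNReal.ofReal (if b then p else 1 - p) := by
  have htrue : Z ⁻¹' {true} = {ω | Z ω = true} := rfl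
  cases b
  · have hcompl : Z ⁻¹' {false} = (Z ⁻¹' {true})ᶜ := by ext; simp
    rw [hcompl, prob_compl_eq_one_sub (hZm (measurableSet_singleton true)), htrue, hZp,
      if_neg Bool.false_ne_true, ENNReal.ofReal_sub 1 hp, ENNReal.ofReal_one]
  · exact hZp

theorem measure_biInter_preimage_bool {Z : ι → Ω → Bool} (hZm : ∀ i, Measurable (Z i))
    (hZ : iIndepFun Z μ) (hZp : ∀ i, μ {ω | Z i ω = true} = ENNReal.ofReal p) (hp0 : 0 ≤ p)
    (hp1 : p ≤ 1) (s : Finset ι) (b : ι → Bool) :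
    μ (⋂ i ∈ s, Z i ⁻¹' {b i}) = ENNReal.ofReal (∏ i ∈ s, if b i then p else 1 - p) := by
  rw [hZ.measure_inter_preimage_eq_mul s fun i _ => measurableSet_singleton (b i),
    ENNReal.ofReal_prod_of_nonneg fun i _ => by split_ifs <;> linarith]
  exact prod_congr rfl fun i _ => measure_preimage_bool (hZm i) (hZp i) hp0 (b i)

end Independence

section HitTime

variable {Ω Ω' : Type*} {α β n : ℝ} {X : ℕ → Ω → Bool} {X' : ℕ → Ω' → Bool} {ω : Ω} {ω' : Ω'}

noncomputable def score (α β : ℝ) (X : ℕ → Ω → Bool) (ω : Ω) (k : ℕ) : ℝ :=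
  α * k + β * #{i ∈ range k | X i ω}

theorem score_mono (hα : 0 ≤ α) (hβ : 0 ≤ β) : Monotone (score α β X ω) := by
  intro k l hkl
  have hcard : #{i ∈ range k | X i ω} ≤ #{i ∈ range l | X i ω} :=
    card_le_card (filter_subset_filter _ (range_subset_range.2 hkl))
  unfold score
  gcongr

theorem score_congr {k : ℕ} (h : ∀ i < k, X i ω = X' i ω') :
    score α β X ω k = score α β X' ω' k := by
  unfold score
  rw [filter_congr fun i hi => by rw [h i (mem_range.1 hi)]]

theorem le_score_of_le_mul (hβ : 0 ≤ β) {k : ℕ} (hk : n ≤ α * k) : n ≤ score α β X ω k :=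
  hk.trans (le_add_of_nonneg_right (by positivity))

theorem hitTime_le_iff (hα : 0 < α) (hβ : 0 ≤ β) {k : ℕ} :
    hitTime α β n X ω ≤ k ↔ n ≤ score α β X ω k := by
  obtain ⟨N, hN⟩ := exists_nat_ge (n / α)
  have hne : {k | n ≤ score α β X ω k}.Nonempty :=
    ⟨N, le_score_of_le_mul hβ ((div_le_iff₀' hα).1 hN)⟩
  unfold hitTime
  exact ⟨fun h => (Nat.sInf_mem hne).trans (score_mono hα.le hβ h), fun h => Nat.sInf_le h⟩

theorem hitTime_le_of_le_mul (hα : 0 < α) (hβ : 0 ≤ β) {N : ℕ} (hN : n ≤ α * N) :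
    hitTime α β n X ω ≤ N :=
  (hitTime_le_iff hα hβ).2 (le_score_of_le_mul hβ hN)

theorem hitTime_congr (hα : 0 < α) (hβ : 0 ≤ β) {M : ℕ} (hN : n ≤ α * (M + 1))
    (h : ∀ i < M, X i ω = X' i ω') : hitTime α β n X ω = hitTime α β n X' ω' := by
  refine eq_of_forall_ge_iff fun k => ?_
  rcases le_or_gt k M with hk | hk
  · rw [hitTime_le_iff hα hβ, hitTime_le_iff hα hβ,
      score_congr fun i hi => h i (hi.trans_le hk)]
  · have hN' : n ≤ α * k := hN.trans (by gcongr; exact_mod_cast hk)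
    exact iff_of_true (hitTime_le_of_le_mul hα hβ hN') (hitTime_le_of_le_mul hα hβ hN')

end HitTime

section Heads

variable {Ω : Type*} {α β n : ℝ} {M : ℕ} {X Y : ℕ → Ω → Bool}

def headsBefore (M : ℕ) (X : ℕ → Ω → Bool) (ω : Ω) : Finset ℕ := {i ∈ range M | X i ω}

noncomputable def hitTimeOfHeads (α β n : ℝ) (S : Finset ℕ) : ℕ :=
  hitTime α β n (fun i (S : Finset ℕ) => decide (i ∈ S)) S

theorem hitTime_eq_hitTimeOfHeads (hα : 0 < α) (hβ : 0 ≤ β) (hN : n ≤ α * (M + 1))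
    (X : ℕ → Ω → Bool) (ω : Ω) :
    hitTime α β n X ω = hitTimeOfHeads α β n (headsBefore M X ω) :=
  hitTime_congr hα hβ hN fun i hi => by simp [headsBefore, hi]

theorem hitTimeOfHeads_lt (hα : 0 < α) (hβ : 0 ≤ β) (hN : n ≤ α * (M + 1)) (S : Finset ℕ) :
    hitTimeOfHeads α β n S < M + 2 :=
  Nat.lt_succ_of_le (hitTime_le_of_le_mul hα hβ (by exact_mod_cast hN))

theorem hitTimeOfHeads_eq_succ_iff (hα : 0 < α) (hβ : 0 ≤ β) (hN : n ≤ α * (M + 1))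
    {S : Finset ℕ} (hS : S ⊆ range M) :
    hitTimeOfHeads α β n S = M + 1 ↔ α * M + β * #S < n := by
  have hscore : score α β (fun i (S : Finset ℕ) => decide (i ∈ S)) S M = α * M + β * #S := by
    simp [score, filter_mem_eq_inter, inter_eq_right.2 hS]
  have hle : hitTimeOfHeads α β n S ≤ M + 1 := Nat.lt_succ_iff.1 (hitTimeOfHeads_lt hα hβ hN S)
  have hiff : hitTimeOfHeads α β n S ≤ M ↔ n ≤ α * M + β * #S :=
    hscore ▸ hitTime_le_iff hα hβ
  rw [← not_le, ← hiff]
  omega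

theorem headsBefore_eq_iff {S : Finset ℕ} (hS : S ⊆ range M) (ω : Ω) :
    headsBefore M X ω = S ↔ ∀ i ∈ range M, X i ω = decide (i ∈ S) := by
  simp only [headsBefore, Finset.ext_iff, mem_filter]
  refine ⟨fun h i hi => by simp [← h i, hi], fun h i => ?_⟩
  by_cases hi : i ∈ range M
  · simp [h i hi, hi]
  · simpa [hi] using fun hiS => hi (hS hiS)

theorem setOf_headsBefore_eq {S S' : Finset ℕ} (hS : S ⊆ range M) (hS' : S' ⊆ range M) :
    {ω | headsBefore M X ω = S ∧ headsBefore M Y ω = S'}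
      = ⋂ i ∈ (range M).disjSum (range M),
          Sum.elim X Y i ⁻¹' {Sum.elim (fun i => decide (i ∈ S)) (fun i => decide (i ∈ S')) i} := by
  ext ω
  simp [headsBefore_eq_iff hS, headsBefore_eq_iff hS']

end Heads

section HitPoly

variable {α β n : ℝ} {M : ℕ}

/-- `P(τ = k)` as a polynomial in the heads probability, for `n ≤ α * (M + 1)`. -/
noncomputable def hitPoly (α β n : ℝ) (M k : ℕ) : ℝ[X] :=
  ∑ S ∈ (range M).powerset with hitTimeOfHeads α β n S = k, prefixWeight ℝ M S

theorem natDegree_hitPoly_le (k : ℕ) : (hitPoly α β n M k).natDegree ≤ M :=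
  natDegree_sum_le_of_forall_le _ _ fun _ hS =>
    natDegree_prefixWeight_le (card_le_of_mem_powerset_range (mem_filter.1 hS).1)

theorem coeff_hitPoly_succ_ne_zero (hα : 0 < α) (hβ : 0 < β) (hN : n ≤ α * (M + 1))
    (hMα : α * M < n) (hMαβ : n ≤ (α + β) * M) :
    (hitPoly α β n M (M + 1)).coeff M ≠ 0 := by
  set c := ⌈(n - α * M) / β⌉₊
  have hc_pos : 0 < c := Nat.ceil_pos.2 (div_pos (by linarith) hβ)
  have hcM : c ≤ M := Nat.ceil_le.2 ((div_le_iff₀ hβ).2 (by linarith))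
  have hstop : ∀ S ∈ (range M).powerset, hitTimeOfHeads α β n S = M + 1 ↔ #S < c := by
    intro S hS
    rw [hitTimeOfHeads_eq_succ_iff hα hβ.le hN (mem_powerset.1 hS), Nat.lt_ceil,
      lt_div_iff₀ hβ]
    constructor <;> intro h <;> linarith
  obtain ⟨m, rfl⟩ : ∃ m, M = m + 1 := ⟨M - 1, by omega⟩
  obtain ⟨c', hc'⟩ : ∃ c', c = c' + 1 := ⟨c - 1, by omega⟩
  rw [hitPoly, filter_congr hstop, hc', coeff_sum_prefixWeight_card_lt (by omega)]
  exact mul_ne_zero (pow_ne_zero _ (by norm_num))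
    (by exact_mod_cast (Nat.choose_pos (by omega)).ne')

end HitPoly

section Game

variable {Ω : Type*} [MeasurableSpace Ω] {μ : Measure Ω} [IsProbabilityMeasure μ] {p : ℝ}
  {X Y : ℕ → Ω → Bool} {α β n : ℝ} {M : ℕ}

theorem measure_headsBefore_eq (hXm : ∀ i, Measurable (X i)) (hYm : ∀ i, Measurable (Y i))
    (hind : iIndepFun (Sum.elim X Y) μ)
    (hXp : ∀ i, μ {ω | X i ω = true} = ENNReal.ofReal p)
    (hYp : ∀ i, μ {ω | Y i ω = true} = ENNReal.ofReal p) (hp0 : 0 ≤ p) (hp1 : p ≤ 1)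
    {S S' : Finset ℕ} (hS : S ⊆ range M) (hS' : S' ⊆ range M) :
    μ {ω | headsBefore M X ω = S ∧ headsBefore M Y ω = S'}
      = ENNReal.ofReal ((prefixWeight ℝ M S).eval p * (prefixWeight ℝ M S').eval p) := by
  rw [setOf_headsBefore_eq hS hS', measure_biInter_preimage_bool (fun i => i.rec hXm hYm) hind
    (fun i => i.rec hXp hYp) hp0 hp1, prod_disjSum]
  simp only [Sum.elim_inl, Sum.elim_inr, decide_eq_true_eq, eval_prefixWeight,
    prod_ite_mem_of_subset hS, prod_ite_mem_of_subset hS', card_range]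

theorem measure_hitTime_le_hitTime (hα : 0 < α) (hβ : 0 ≤ β) (hN : n ≤ α * (M + 1))
    (hXm : ∀ i, Measurable (X i)) (hYm : ∀ i, Measurable (Y i))
    (hind : iIndepFun (Sum.elim X Y) μ)
    (hXp : ∀ i, μ {ω | X i ω = true} = ENNReal.ofReal p)
    (hYp : ∀ i, μ {ω | Y i ω = true} = ENNReal.ofReal p) (hp0 : 0 ≤ p) (hp1 : p ≤ 1) :
    μ {ω | hitTime α β n X ω ≤ hitTime α β n Y ω}
      = ENNReal.ofReal ((halfOneAddSumSq (range (M + 2)) (hitPoly α β n M)).eval p) := by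
  have hZm : ∀ i, Measurable (Sum.elim X Y i) := fun i => i.rec hXm hYm
  set P := (range M).powerset
  set D := (P ×ˢ P).filter fun x => hitTimeOfHeads α β n x.1 ≤ hitTimeOfHeads α β n x.2
  set V : Ω → Finset ℕ × Finset ℕ := fun ω => (headsBefore M X ω, headsBefore M Y ω)
  set w : Finset ℕ → ℝ := fun S => (prefixWeight ℝ M S).eval p
  have hevent : {ω | hitTime α β n X ω ≤ hitTime α β n Y ω} = V ⁻¹' D := by
    ext ω
    simp [D, P, V, hitTime_eq_hitTimeOfHeads hα hβ hN, headsBefore]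
  have hfiber : ∀ x ∈ D, V ⁻¹' {x} = {ω | headsBefore M X ω = x.1 ∧ headsBefore M Y ω = x.2} :=
    fun x _ => by ext ω; simp [V, Prod.ext_iff]
  have hsub : ∀ x ∈ D, x.1 ⊆ range M ∧ x.2 ⊆ range M := fun x hx => by
    simpa [D, P] using (mem_filter.1 hx).1
  have hw : ∀ S, 0 ≤ w S := fun S => by
    simp only [w, eval_prefixWeight]
    exact mul_nonneg (pow_nonneg hp0 _) (pow_nonneg (sub_nonneg.2 hp1) _)
  have hpair := two_mul_sum_filter_le P (range (M + 2)) (hitTimeOfHeads α β n)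
    (fun S _ => mem_range.2 (hitTimeOfHeads_lt hα hβ hN S)) w
  rw [← eval_finsetSum, sum_prefixWeight, eval_one] at hpair
  rw [hevent, ← sum_measure_preimage_singleton D fun x hx => by
      rw [hfiber x hx, setOf_headsBefore_eq (hsub x hx).1 (hsub x hx).2]
      exact .biInter (countable_toSet _) fun i _ => hZm i (measurableSet_singleton _),
    sum_congr rfl fun x hx => by
      rw [hfiber x hx, measure_headsBefore_eq hXm hYm hind hXp hYp hp0 hp1 (hsub x hx).1
        (hsub x hx).2],
    ← ENNReal.ofReal_sum_of_nonneg fun x _ => mul_nonneg (hw _) (hw _), eval_halfOneAddSumSq]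
  simp only [hitPoly, eval_finsetSum]
  congr 1
  linarith

end Game

theorem exists_nat_of_ceil_div_lt {α β n : ℝ} (hα : 0 < α) (hβ : 0 < β) (hn : 0 < n)
    (hceil : ⌈n / (α + β)⌉ < ⌈n / α⌉) :
    ∃ M : ℕ, (⌈n / α⌉).toNat = M + 1 ∧ α * M < n ∧ n ≤ α * (M + 1) ∧ n ≤ (α + β) * M := by
  have hpos : 0 < ⌈n / α⌉₊ := Nat.ceil_pos.2 (div_pos hn hα)
  refine ⟨⌈n / α⌉₊ - 1, by rw [Int.ceil_toNat]; omega, ?_, ?_, ?_⟩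
  · have h : ⌈n / α⌉₊ - 1 < ⌈n / α⌉₊ := by omega
    rw [Nat.lt_ceil, lt_div_iff₀ hα] at h
    linarith
  · have h := Nat.le_ceil (n / α)
    rw [div_le_iff₀ hα] at h
    push_cast [Nat.one_le_iff_ne_zero.2 hpos.ne']
    linarith
  · have hcast : (⌈n / α⌉₊ : ℤ) = ⌈n / α⌉ := by
      rw [← Int.ceil_toNat, Int.toNat_of_nonneg (Int.ceil_nonneg (div_pos hn hα).le)]
    have h : ⌈n / (α + β)⌉ ≤ ((⌈n / α⌉₊ - 1 : ℕ) : ℤ) := by omega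
    rw [Int.ceil_le, div_le_iff₀ (by linarith)] at h
    push_cast at h
    linarith

theorem stmt_18 (α β n : ℝ) (hα : 0 < α) (hβ : 0 < β) (hn : 0 < n)
    (hceil : ⌈n / (α + β)⌉ < ⌈n / α⌉) :
    -- Part 1: if each `P k` is a polynomial in `p` (rational coefficients) and only finitely
    -- many `k` contribute, then `p ↦ (1 + ∑ₖ P k p ^ 2) / 2` is a polynomial in `p`.
    (∀ (s : Finset ℕ) (P : ℕ → ℝ → ℝ),
      (∀ k, ∃ q : Polynomial ℚ, ∀ p : ℝ, P k p = (q.map (algebraMap ℚ ℝ)).eval p) →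
      (∀ k ∉ s, ∀ p : ℝ, P k p = 0) →
      ∃ Q : Polynomial ℝ, ∀ p : ℝ, (1 + ∑ k ∈ s, P k p ^ 2) / 2 = Q.eval p) ∧
    -- Part 2: the first player's winning probability is a polynomial in `p`
    -- of degree `2⌈n/α⌉ - 2`.
    ∃ Q : Polynomial ℝ, Q.natDegree = 2 * (⌈n / α⌉).toNat - 2 ∧
      ∀ p ∈ Set.Icc (0 : ℝ) 1,
      ∀ (Ω : Type) [MeasurableSpace Ω] (μ : Measure Ω) [IsProbabilityMeasure μ]
        (X Y : ℕ → Ω → Bool),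
        (∀ i, Measurable (X i)) → (∀ i, Measurable (Y i)) →
        iIndepFun (Sum.elim X Y) μ →
        (∀ i, μ {ω | X i ω = true} = ENNReal.ofReal p) →
        (∀ i, μ {ω | Y i ω = true} = ENNReal.ofReal p) →
        μ {ω | hitTime α β n X ω ≤ hitTime α β n Y ω} = ENNReal.ofReal (Q.eval p) := by
  refine ⟨fun s P hP _ =>
    exists_eval_eq_halfOneAddSumSq s fun k => (hP k).elim fun _ hq => ⟨_, hq⟩, ?_⟩
  obtain ⟨M, hceilM, hMα, hN, hMαβ⟩ := exists_nat_of_ceil_div_lt hα hβ hn hceil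
  refine ⟨halfOneAddSumSq (range (M + 2)) (hitPoly α β n M), ?_,
    fun p hp Ω _ μ _ X Y hXm hYm hind hXp hYp =>
      measure_hitTime_le_hitTime hα hβ.le hN hXm hYm hind hXp hYp hp.1 hp.2⟩
  rw [natDegree_halfOneAddSumSq (fun k _ => natDegree_hitPoly_le k) (self_mem_range_succ (M + 1))
    (coeff_hitPoly_succ_ne_zero hα hβ hN hMα hMαβ), hceilM]
  omega
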